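/- Set μ_j = e^{−iπ/6 − 2πij/3} for j = 1, 2, 3. There exist constants C > 0 and R > 0 such that for every real z ≥ R: for each root λ ∈ ℂ of λ³ + λ + iz = 0 there is exactly one index j ∈ {1,2,3} with |λ − μ_j z^{1/3} + (1/(3μ_j)) z^{−1/3}| ≤ C z^{−2/3} (where z^{1/3} is the real cube root of z), and distinct roots correspond to distinct indices j. -/

import Mathlib

/-!
Put `t = z^{1/3}`, so the cubic reads `λ³ + λ = w_j³` with `w_j = μ_j t`, and
`∏ⱼ (λ - w_j) = λ³ + i t³ = -λ`. The `w_j` are the vertices of an equilateral triangle of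
side `√3 t`, and `|λ| ≤ 2t`, so the root is within `O(1/t)` of the nearest vertex. One Newton
step from `w_j` then gives `λ = w_j - 1/(3 w_j) + O(t⁻³)`. Distinct indices are told apart
because the vertices are far apart, and distinct roots because `λ ↦ λ³ + λ` is injective on
unit discs around the vertices.
-/

/-- `μ_j = e^{-iπ/6 - 2πij/3}` for `j = 1, 2, 3` (indexed by `Fin 3`, with `j ↦ j+1`). -/
noncomputable def mu (j : Fin 3) : ℂ :=
  Complex.exp (-(Real.pi : ℂ) * Complex.I / 6
    - 2 * (Real.pi : ℂ) * Complex.I * ((j : ℕ) + 1) / 3)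

open Complex Real Finset

theorem mu_pow_three (j : Fin 3) : mu j ^ 3 = -I := by
  rw [mu, ← Complex.exp_nat_mul]
  have : ((3 : ℕ) : ℂ) * (-(π : ℂ) * I / 6 - 2 * π * I * ((j : ℕ) + 1) / 3)
      = -π / 2 * I + ((-((j : ℕ) + 1 : ℤ) : ℤ) : ℂ) * (2 * π * I) := by
    push_cast; ring
  rw [this, Complex.exp_add, exp_int_mul_two_pi_mul_I, mul_one, exp_neg_pi_div_two_mul_I]

theorem norm_mu (j : Fin 3) : ‖mu j‖ = 1 := by
  rw [mu, Complex.norm_exp]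
  simp

theorem mu_eq_exp_mul_I (j : Fin 3) :
    mu j = exp ((-(π / 6) - 2 * π * ((j : ℕ) + 1) / 3 : ℝ) * I) := by
  rw [mu]; push_cast; ring_nf

theorem mu_zero : mu 0 = (-√3 - I) / 2 := by
  rw [mu_eq_exp_mul_I, exp_ofReal_mul_I,
    show -(π / 6) - 2 * π * (((0 : Fin 3) : ℕ) + 1) / 3 = -(π - π / 6) by simp; ring,
    Real.cos_neg, Real.sin_neg, Real.cos_pi_sub, Real.sin_pi_sub, cos_pi_div_six, sin_pi_div_six]
  push_cast; ring

theorem mu_one : mu 1 = I := by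
  rw [mu_eq_exp_mul_I, exp_ofReal_mul_I,
    show -(π / 6) - 2 * π * (((1 : Fin 3) : ℕ) + 1) / 3 = π / 2 - 2 * π by simp; ring,
    Real.cos_sub_two_pi, Real.sin_sub_two_pi, Real.cos_pi_div_two, Real.sin_pi_div_two]
  push_cast; ring

theorem mu_two : mu 2 = (√3 - I) / 2 := by
  rw [mu_eq_exp_mul_I, exp_ofReal_mul_I,
    show -(π / 6) - 2 * π * (((2 : Fin 3) : ℕ) + 1) / 3 = -(π / 6) - 2 * π by simp; ring,
    Real.cos_sub_two_pi, Real.sin_sub_two_pi, Real.cos_neg, Real.sin_neg, cos_pi_div_six,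
    sin_pi_div_six]
  push_cast; ring

theorem sqrt_three_sq : (√3 : ℂ) ^ 2 = 3 := by
  rw [← ofReal_pow, Real.sq_sqrt (by norm_num)]; norm_num

theorem prod_sub_mu_mul (X T : ℂ) : ∏ j, (X - mu j * T) = X ^ 3 + I * T ^ 3 := by
  rw [Fin.prod_univ_three, mu_zero, mu_one, mu_two]
  linear_combination (-(T ^ 2 * X) / 4 + I * T ^ 3 / 4) * sqrt_three_sq
    + (-3 / 4 * X * T ^ 2 - I * T ^ 3 / 4) * I_sq

theorem norm_mu_sub_mu {j k : Fin 3} (h : j ≠ k) : ‖mu j - mu k‖ = √3 := by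
  have h3 : √3 ^ 2 = 3 := Real.sq_sqrt (by norm_num)
  fin_cases j <;> fin_cases k <;> simp only [ne_eq, not_true_eq_false] at h <;>
    simp [mu_zero, mu_one, mu_two, Complex.norm_def, Complex.normSq_apply] <;> ring_nf <;>
    simp [h3] <;> norm_num

theorem exists_norm_sub_mul_pow_le_prod {ι E : Type*} [Fintype ι] [Nonempty ι]
    [SeminormedAddCommGroup E] (x : E) (w : ι → E) {s : ℝ} (hs0 : 0 ≤ s)
    (hs : Pairwise fun j k => s ≤ ‖w j - w k‖) :
    ∃ j, ‖x - w j‖ * (s / 2) ^ (Fintype.card ι - 1) ≤ ∏ k, ‖x - w k‖ := by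
  classical
  obtain ⟨j, -, hj⟩ := exists_min_image univ (fun k => ‖x - w k‖) univ_nonempty
  refine ⟨j, ?_⟩
  rw [← mul_prod_erase univ _ (mem_univ j), ← card_univ, ← card_erase_of_mem (mem_univ j),
    ← prod_const]
  gcongr with k hk
  have hjk : s ≤ ‖w k - w j‖ := hs (ne_of_mem_erase hk)
  linarith [norm_sub_le_norm_sub_add_norm_sub (w k) x (w j), norm_sub_rev (w k) x,
    hj k (mem_univ k)]

theorem norm_le_two_mul_of_norm_pow_three_add_le {A : Type*} [NormedDivisionRing A]
    {x : A} {t : ℝ} (ht : 1 ≤ t) (h : ‖x ^ 3 + x‖ ≤ t ^ 3) : ‖x‖ ≤ 2 * t := by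
  have hx : ‖x‖ ^ 3 ≤ t ^ 3 + ‖x‖ := by
    calc ‖x‖ ^ 3 = ‖x ^ 3‖ := (norm_pow x 3).symm
      _ ≤ ‖x ^ 3 + x‖ + ‖x‖ := norm_le_add_norm_add _ _
      _ ≤ t ^ 3 + ‖x‖ := by linarith
  by_contra! hlt
  nlinarith [mul_lt_mul'' hlt hlt (by linarith) (by linarith)]

theorem norm_sub_add_one_div_le_of_pow_three_add_self_eq {x w : ℂ} (hw : 10 ≤ ‖w‖)
    (hx : x ^ 3 + x = w ^ 3) (hxw : ‖x - w‖ ≤ 8 / (3 * ‖w‖)) :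
    ‖x - w + 1 / (3 * w)‖ ≤ 2 / ‖w‖ ^ 3 := by
  -- With `δ = x - w` the equation reads `δ D = -w`; then `3w (δ + 1/(3w)) D = D - 3w² = N`,
  -- and `N = O(1)` while `D ≈ 3w²`.
  set r := ‖w‖
  have hr : 0 < r := by linarith
  have hw0 : w ≠ 0 := norm_pos_iff.mp hr
  set δ := x - w
  set N := 3 * w * δ + δ ^ 2 + 1
  set D := 3 * w ^ 2 + N
  have hδD : δ * D = -w := by
    simp only [D, N, δ]; linear_combination hx
  have key : 3 * w * (x - w + 1 / (3 * w)) * D = N := by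
    have : 3 * w * (x - w + 1 / (3 * w)) = 3 * w * δ + 1 := by simp only [δ]; field_simp
    rw [this]; linear_combination 3 * w * hδD
  have hrδ : r * ‖δ‖ ≤ 8 / 3 := by
    rw [le_div_iff₀ (by positivity : (0 : ℝ) < 3 * r)] at hxw; linarith
  have hδ : ‖δ‖ ≤ 1 := by nlinarith
  have hN : ‖N‖ ≤ 10 := by
    calc ‖N‖ ≤ ‖3 * w * δ‖ + ‖δ ^ 2‖ + ‖(1 : ℂ)‖ := norm_add₃_le
      _ = 3 * (r * ‖δ‖) + ‖δ‖ ^ 2 + 1 := by simp [r]; ring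
      _ ≤ 10 := by nlinarith [norm_nonneg δ]
  have hD : 2 * r ^ 2 ≤ ‖D‖ := by
    have h3 : ‖3 * w ^ 2‖ = 3 * r ^ 2 := by simp [r]
    have : 3 * r ^ 2 ≤ ‖D‖ + ‖N‖ := h3 ▸ norm_le_add_norm_add (3 * w ^ 2) N
    nlinarith
  have hE : 3 * r * ‖x - w + 1 / (3 * w)‖ * ‖D‖ = ‖N‖ := by
    rw [← key]; simp [r]
  rw [le_div_iff₀ (by positivity)]
  nlinarith [mul_le_mul_of_nonneg_left hD (by positivity : 0 ≤ 3 * r * ‖x - w + 1 / (3 * w)‖)]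

theorem norm_sub_le_one_of_norm_sub_add_one_div_le {x w : ℂ} (hw : 2 ≤ ‖w‖)
    (h : ‖x - w + 1 / (3 * w)‖ ≤ 1 / ‖w‖ ^ 2) : ‖x - w‖ ≤ 1 := by
  have h1 : 1 / ‖w‖ ^ 2 ≤ 1 / 4 := by
    gcongr; nlinarith
  have h2 : 1 / (3 * ‖w‖) ≤ 1 / 6 := by
    gcongr; linarith
  calc ‖x - w‖ ≤ ‖x - w + 1 / (3 * w)‖ + ‖1 / (3 * w)‖ := norm_le_add_norm_add _ _
    _ ≤ 1 := by rw [show ‖1 / (3 * w)‖ = 1 / (3 * ‖w‖) by simp]; linarith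

theorem injOn_pow_three_add_self_closedBall {w : ℂ} (hw : 3 ≤ ‖w‖) :
    Set.InjOn (fun x : ℂ => x ^ 3 + x) (Metric.closedBall w 1) := by
  intro x hx y hy h
  rw [Metric.mem_closedBall, dist_eq_norm] at hx hy
  by_contra hne
  -- `x² + xy + y² + 1 = 0` is impossible near `w`, where the left side is close to `3w²`.
  set d := x - w
  set e := y - w
  have hS : 3 * w ^ 2 = -(3 * w * (d + e) + (d ^ 2 + d * e + e ^ 2) + 1) := by
    have : (x - y) * (x ^ 2 + x * y + y ^ 2 + 1) = 0 := by simp only at h; linear_combination h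
    have hxy := (mul_eq_zero.mp this).resolve_left (sub_ne_zero.mpr hne)
    simp only [d, e]; linear_combination hxy
  have hbound : ‖3 * w * (d + e) + (d ^ 2 + d * e + e ^ 2) + 1‖ ≤ 6 * ‖w‖ + 4 := by
    have hde : ‖d + e‖ ≤ 2 := by linarith [norm_add_le d e]
    have hq : ‖d ^ 2 + d * e + e ^ 2‖ ≤ 3 := by
      calc ‖d ^ 2 + d * e + e ^ 2‖ ≤ ‖d ^ 2‖ + ‖d * e‖ + ‖e ^ 2‖ := norm_add₃_le
        _ = ‖d‖ ^ 2 + ‖d‖ * ‖e‖ + ‖e‖ ^ 2 := by rw [norm_pow, norm_pow, norm_mul]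
        _ ≤ 3 := by nlinarith [norm_nonneg d, norm_nonneg e]
    calc _ ≤ ‖3 * w * (d + e)‖ + ‖d ^ 2 + d * e + e ^ 2‖ + ‖(1 : ℂ)‖ :=
          norm_add₃_le
      _ ≤ 3 * ‖w‖ * 2 + 3 + 1 := by
        rw [norm_mul, norm_mul, norm_one]; norm_num; gcongr
      _ = 6 * ‖w‖ + 4 := by ring
  have : 3 * ‖w‖ ^ 2 ≤ 6 * ‖w‖ + 4 := by
    have := congrArg norm hS
    rw [norm_neg, norm_mul, norm_pow] at this
    norm_num at this
    linarith
  nlinarith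

section Asymptotics

variable {t : ℝ} {x y : ℂ}

theorem norm_mu_mul_ofReal (j : Fin 3) (ht : 0 ≤ t) : ‖mu j * t‖ = t := by
  rw [norm_mul, norm_mu, one_mul, norm_real, Real.norm_of_nonneg ht]

theorem norm_mu_mul_ofReal_sub (ht : 0 ≤ t) {j k : Fin 3} (hjk : j ≠ k) :
    ‖mu j * t - mu k * t‖ = √3 * t := by
  rw [← sub_mul, norm_mul, norm_mu_sub_mu hjk, norm_real, Real.norm_of_nonneg ht]

theorem pow_three_add_self_eq_mu_mul_pow_three (j : Fin 3) (hx : x ^ 3 + x + I * t ^ 3 = 0) :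
    x ^ 3 + x = (mu j * t) ^ 3 := by
  rw [mul_pow, mu_pow_three]; linear_combination hx

theorem exists_norm_sub_mu_mul_le (ht : 1 ≤ t) (hx : x ^ 3 + x + I * t ^ 3 = 0) :
    ∃ j, ‖x - mu j * t‖ ≤ 8 / (3 * t) := by
  have ht0 : 0 ≤ t := by linarith
  have hsep : Pairwise fun j k => √3 * t ≤ ‖mu j * t - mu k * t‖ := fun j k hjk =>
    (norm_mu_mul_ofReal_sub ht0 hjk).ge
  have hprod : ∏ j, ‖x - mu j * t‖ ≤ 2 * t := by
    rw [← norm_prod, prod_sub_mu_mul, show x ^ 3 + I * t ^ 3 = -x by linear_combination hx,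
      norm_neg]
    refine norm_le_two_mul_of_norm_pow_three_add_le ht ?_
    rw [show x ^ 3 + x = -(I * t ^ 3) by linear_combination hx]
    simp [Real.norm_of_nonneg ht0]
  obtain ⟨j, hj⟩ := exists_norm_sub_mul_pow_le_prod x (fun j => mu j * t) (by positivity) hsep
  refine ⟨j, (le_div_iff₀ (by positivity)).mpr ?_⟩
  have h3 : (√3 * t / 2) ^ (Fintype.card (Fin 3) - 1) = 3 / 4 * t ^ 2 := by
    rw [Fintype.card_fin, div_pow, mul_pow, Real.sq_sqrt (by norm_num)]; ring
  rw [h3] at hj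
  nlinarith [norm_nonneg (x - mu j * t)]

theorem eq_of_norm_sub_mu_mul_le_one (ht : 2 ≤ t) {j k : Fin 3} (hj : ‖x - mu j * t‖ ≤ 1)
    (hk : ‖x - mu k * t‖ ≤ 1) : j = k := by
  by_contra hjk
  have hsep : √3 * t ≤ 2 := by
    calc √3 * t = ‖mu j * t - mu k * t‖ := (norm_mu_mul_ofReal_sub (by linarith) hjk).symm
      _ ≤ 2 := by
          linarith [norm_sub_le_norm_sub_add_norm_sub (mu j * t) x (mu k * t),
            norm_sub_rev (mu j * t) x]
  nlinarith [Real.sq_sqrt (show (0 : ℝ) ≤ 3 by norm_num), Real.sqrt_nonneg 3]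

theorem existsUnique_norm_sub_add_one_div_le (ht : 10 ≤ t) (hx : x ^ 3 + x + I * t ^ 3 = 0) :
    ∃! j : Fin 3, ‖x - mu j * t + 1 / (3 * (mu j * t))‖ ≤ 1 / t ^ 2 := by
  have ht0 : 0 ≤ t := by linarith
  obtain ⟨j, hj⟩ := exists_norm_sub_mu_mul_le (by linarith) hx
  refine ⟨j, ?_, fun k hk => ?_⟩
  · have hw := norm_mu_mul_ofReal j ht0
    calc _ ≤ 2 / ‖mu j * t‖ ^ 3 :=
          norm_sub_add_one_div_le_of_pow_three_add_self_eq (by rwa [hw])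
            (pow_three_add_self_eq_mu_mul_pow_three j hx) (by rwa [hw])
      _ ≤ 1 / t ^ 2 := by
          rw [hw, div_le_div_iff₀ (by positivity) (by positivity)]; nlinarith
  · have hwk := norm_mu_mul_ofReal k ht0
    have hk' := norm_sub_le_one_of_norm_sub_add_one_div_le (w := mu k * t)
      (by rw [hwk]; linarith) (by rwa [hwk])
    refine eq_of_norm_sub_mu_mul_le_one (by linarith) hk' (hj.trans ?_)
    rw [div_le_one (by positivity)]; linarith

theorem eq_of_norm_sub_add_one_div_le (ht : 3 ≤ t) (hx : x ^ 3 + x + I * t ^ 3 = 0)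
    (hy : y ^ 3 + y + I * t ^ 3 = 0) (j : Fin 3)
    (hxj : ‖x - mu j * t + 1 / (3 * (mu j * t))‖ ≤ 1 / t ^ 2)
    (hyj : ‖y - mu j * t + 1 / (3 * (mu j * t))‖ ≤ 1 / t ^ 2) : x = y := by
  have hw := norm_mu_mul_ofReal j (by linarith : (0 : ℝ) ≤ t)
  have hw2 : 2 ≤ ‖mu j * t‖ := by linarith
  have hball : ∀ v, ‖v - mu j * t + 1 / (3 * (mu j * t))‖ ≤ 1 / t ^ 2 →
      v ∈ Metric.closedBall (mu j * t) 1 := fun v hv => by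
    rw [Metric.mem_closedBall, dist_eq_norm]
    exact norm_sub_le_one_of_norm_sub_add_one_div_le hw2 (by rwa [hw])
  exact injOn_pow_three_add_self_closedBall (by rwa [hw]) (hball x hxj) (hball y hyj)
    (by simp only; linear_combination hx - hy)

end Asymptotics

theorem stmt5 :
    ∃ C : ℝ, 0 < C ∧ ∃ R : ℝ, 0 < R ∧ ∀ z : ℝ, R ≤ z →
      (∀ lam : ℂ, lam ^ 3 + lam + Complex.I * z = 0 →
        ∃! j : Fin 3,
          ‖lam - mu j * ((z ^ ((1 : ℝ) / 3) : ℝ) : ℂ)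
              + (1 / (3 * mu j)) * ((z ^ (-(1 : ℝ) / 3) : ℝ) : ℂ)‖
            ≤ C * z ^ (-(2 : ℝ) / 3)) ∧
      (∀ lam lam' : ℂ,
        lam ^ 3 + lam + Complex.I * z = 0 → lam' ^ 3 + lam' + Complex.I * z = 0 →
        lam ≠ lam' → ∀ j : Fin 3,
          ‖lam - mu j * ((z ^ ((1 : ℝ) / 3) : ℝ) : ℂ)
              + (1 / (3 * mu j)) * ((z ^ (-(1 : ℝ) / 3) : ℝ) : ℂ)‖
            ≤ C * z ^ (-(2 : ℝ) / 3) →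
          ‖lam' - mu j * ((z ^ ((1 : ℝ) / 3) : ℝ) : ℂ)
              + (1 / (3 * mu j)) * ((z ^ (-(1 : ℝ) / 3) : ℝ) : ℂ)‖
            ≤ C * z ^ (-(2 : ℝ) / 3) → False) := by
  refine ⟨1, one_pos, 1000, by norm_num, fun z hz => ?_⟩
  have hz0 : 0 ≤ z := by linarith
  set t := z ^ ((1 : ℝ) / 3)
  have hcube : (t : ℂ) ^ 3 = z := by
    rw [← ofReal_pow, ← Real.rpow_natCast, ← Real.rpow_mul hz0]; norm_num
  have ht : 10 ≤ t := by
    rw [show (10 : ℝ) = 1000 ^ ((1 : ℝ) / 3) by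
      rw [show (1000 : ℝ) = 10 ^ (3 : ℝ) by norm_num, ← Real.rpow_mul (by norm_num)]
      norm_num]
    exact Real.rpow_le_rpow (by norm_num) hz (by norm_num)
  have hinv : z ^ (-(1 : ℝ) / 3) = t⁻¹ := by rw [neg_div, Real.rpow_neg hz0]
  have happrox : ∀ (x : ℂ) (j : Fin 3),
      x - mu j * t + 1 / (3 * mu j) * ((z ^ (-(1 : ℝ) / 3) : ℝ) : ℂ)
        = x - mu j * t + 1 / (3 * (mu j * t)) := by
    intro x j
    rw [hinv, ofReal_inv]; field_simp
  have hbound : 1 * z ^ (-(2 : ℝ) / 3) = 1 / t ^ 2 := by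
    rw [one_mul, neg_div, Real.rpow_neg hz0, ← Real.rpow_natCast, ← Real.rpow_mul hz0]; norm_num
  simp only [happrox, hbound, ← hcube]
  exact ⟨fun x hx => existsUnique_norm_sub_add_one_div_le ht hx,
    fun x y hx hy hne j hxj hyj =>
      hne (eq_of_norm_sub_add_one_div_le (by linarith) hx hy j hxj hyj)⟩
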